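/- Combinatorial Hodge theorem: the kernel of the Hodge Laplacian L_i is isomorphic to the i-th simplicial homology with real coefficients, i.e., ker L_i ≅ ker ∂_i / im ∂_{i+1}. -/

import Mathlib

/-!
Since `⟪L x, x⟫ = ‖∂₂ᵀ x‖² + ‖∂₁ x‖²`, the kernel of `L` is `(im ∂₂)ᗮ ⊓ ker ∂₁`, the orthogonal
complement of the boundaries inside the cycles; in finite dimension it therefore has the
dimension of `ker ∂₁ / im ∂₂`.
-/

open Module LinearMap

namespace LinearMap

variable {𝕜 E F G : Type*} [RCLike 𝕜]
  [NormedAddCommGroup E] [InnerProductSpace 𝕜 E] [FiniteDimensional 𝕜 E]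
  [NormedAddCommGroup F] [InnerProductSpace 𝕜 F] [FiniteDimensional 𝕜 F]
  [NormedAddCommGroup G] [InnerProductSpace 𝕜 G] [FiniteDimensional 𝕜 G]

theorem re_inner_self_comp_adjoint_add_adjoint_comp_self (A : G →ₗ[𝕜] E) (B : E →ₗ[𝕜] F)
    (x : E) :
    RCLike.re (inner 𝕜 ((A ∘ₗ adjoint A + adjoint B ∘ₗ B) x) x) =
      ‖adjoint A x‖ ^ 2 + ‖B x‖ ^ 2 := by
  rw [add_apply, comp_apply, comp_apply, inner_add_left, ← adjoint_inner_right A,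
    adjoint_inner_left B, map_add, inner_self_eq_norm_sq, inner_self_eq_norm_sq]

theorem ker_self_comp_adjoint_add_adjoint_comp_self (A : G →ₗ[𝕜] E) (B : E →ₗ[𝕜] F) :
    ker (A ∘ₗ adjoint A + adjoint B ∘ₗ B) = ker (adjoint A) ⊓ ker B := by
  ext x
  simp only [mem_ker, Submodule.mem_inf]
  constructor
  · intro hx
    have hsum : ‖adjoint A x‖ ^ 2 + ‖B x‖ ^ 2 = 0 := by
      rw [← re_inner_self_comp_adjoint_add_adjoint_comp_self, hx, inner_zero_left, map_zero]
    rw [add_eq_zero_iff_of_nonneg (by positivity) (by positivity)] at hsum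
    simpa using hsum
  · rintro ⟨hA, hB⟩
    simp [hA, hB]

end LinearMap

theorem Submodule.finrank_quotient_comap_subtype_add_finrank {K V : Type*} [DivisionRing K]
    [AddCommGroup V] [Module K V] {N U : Submodule K V} [FiniteDimensional K U] (h : N ≤ U) :
    finrank K (U ⧸ N.comap U.subtype) + finrank K N = finrank K U := by
  rw [← (comapSubtypeEquivOfLe h).finrank_eq]
  exact finrank_quotient_add_finrank _

/-- Combinatorial Hodge theorem: for a real chain complex
`C_{i+1} →∂₂ C_i →∂₁ C_{i-1}` of finite-dimensional inner product spaces with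
`∂₁ ∘ ∂₂ = 0`, the kernel of the Hodge Laplacian
`L = ∂₂ ∂₂ᵀ + ∂₁ᵀ ∂₁` is isomorphic to the `i`-th homology `ker ∂₁ / im ∂₂`. -/
theorem ker_hodgeLaplacian_iso_homology
    {Cm Ci Cp : Type*}
    [NormedAddCommGroup Cm] [InnerProductSpace ℝ Cm] [FiniteDimensional ℝ Cm]
    [NormedAddCommGroup Ci] [InnerProductSpace ℝ Ci] [FiniteDimensional ℝ Ci]
    [NormedAddCommGroup Cp] [InnerProductSpace ℝ Cp] [FiniteDimensional ℝ Cp]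
    (d1 : Ci →ₗ[ℝ] Cm) (d2 : Cp →ₗ[ℝ] Ci) (h : d1 ∘ₗ d2 = 0) :
    Nonempty
      ((LinearMap.ker
          (d2 ∘ₗ LinearMap.adjoint d2 + LinearMap.adjoint d1 ∘ₗ d1)) ≃ₗ[ℝ]
        (LinearMap.ker d1 ⧸
          Submodule.comap (LinearMap.ker d1).subtype (LinearMap.range d2))) := by
  have hle : range d2 ≤ ker d1 := range_le_ker_iff.mpr h
  have harmonic := Submodule.finrank_add_inf_finrank_orthogonal hle
  have homology := Submodule.finrank_quotient_comap_subtype_add_finrank hle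
  rw [ker_self_comp_adjoint_add_adjoint_comp_self, ← orthogonal_range]
  exact FiniteDimensional.nonempty_linearEquiv_of_finrank_eq (by omega)
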